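/- Let E be a complete real inner product space, let J : E → ℝ be differentiable with gradient ∇J, satisfying for some L > 0 the L-smoothness lower bound: for all θ, θ' ∈ E, J(θ') ≥ J(θ) + ⟨∇J(θ), θ' − θ⟩ − (L/2)·‖θ' − θ‖², and the Polyak–Łojasiewicz condition with constant c > 0 relative to J⋆ ∈ ℝ: ‖∇J(θ)‖² ≥ c·(J⋆ − J(θ)) for all θ. Fix a step size α > 0 with L·α ≤ 1, set η := α·c/2, and assume η ≤ 1 and the noise condition L·α²·δ² ≤ η·ε' for some δ ≥ 0 and ε' > 0. Fix θ ∈ E with J⋆ − J(θ) ≥ 0. Let (Ω, μ) be a probability space and g : Ω → E Bochner-integrable with ∫ g dμ = ∇J(θ), with ω ↦ ‖g(ω)‖² integrable, ∫ ‖g(ω) − ∇J(θ)‖² dμ ≤ δ², and ω ↦ J(θ + α·g(ω)) integrable. Then J⋆ − ∫ J(θ + α·g(ω)) dμ(ω) ≤ (1 − η)·(J⋆ − J(θ)) + η·ε'/2. -/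

import Mathlib

/-!
Smoothness bounds `J (θ + α g)` from below by a quadratic in `g`; taking expectations, the
unbiasedness of `g` turns the linear term into `α ‖∇J θ‖²` and the variance bound controls the
quadratic one by `δ² + ‖∇J θ‖²`. Since `L α ≤ 1`, at least `α ‖∇J θ‖² / 2` of progress survives,
which the PL inequality converts into the contraction factor `1 - η`; the noise leaves `η ε' / 2`.
-/

open MeasureTheory RealInnerProductSpace

section Expectation

variable {E Ω : Type*} [NormedAddCommGroup E] [InnerProductSpace ℝ E]
  [MeasurableSpace Ω] {μ : Measure Ω} [IsProbabilityMeasure μ] {g : Ω → E}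

theorem integral_norm_sub_integral_sq [CompleteSpace E] (hg : Integrable g μ)
    (hg_sq : Integrable (fun ω => ‖g ω‖ ^ 2) μ) :
    ∫ ω, ‖g ω - ∫ ω', g ω' ∂μ‖ ^ 2 ∂μ = ∫ ω, ‖g ω‖ ^ 2 ∂μ - ‖∫ ω, g ω ∂μ‖ ^ 2 := by
  set m := ∫ ω, g ω ∂μ
  have h_inner : Integrable (fun ω => ⟪m, g ω⟫) μ := hg.const_inner m
  have h_lin : Integrable (fun ω => ‖g ω‖ ^ 2 - 2 * ⟪m, g ω⟫) μ :=
    hg_sq.sub (h_inner.const_mul 2)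
  calc ∫ ω, ‖g ω - m‖ ^ 2 ∂μ
      = ∫ ω, (‖g ω‖ ^ 2 - 2 * ⟪m, g ω⟫ + ‖m‖ ^ 2) ∂μ := by
        congr with ω
        rw [norm_sub_sq_real, real_inner_comm]
    _ = ∫ ω, ‖g ω‖ ^ 2 ∂μ - 2 * ‖m‖ ^ 2 + ‖m‖ ^ 2 := by
        rw [integral_add h_lin (integrable_const _), integral_sub hg_sq (h_inner.const_mul 2),
          integral_const_mul, integral_inner hg, real_inner_self_eq_norm_sq, integral_const,
          probReal_univ, one_smul]
    _ = ∫ ω, ‖g ω‖ ^ 2 ∂μ - ‖m‖ ^ 2 := by ring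

theorem le_integral_comp_add_smul_of_forall_le [CompleteSpace E] {f : E → ℝ} {x v : E}
    {L : ℝ} (hf : ∀ y, f y ≥ f x + ⟪v, y - x⟫ - L / 2 * ‖y - x‖ ^ 2) (α : ℝ)
    (hg : Integrable g μ) (hg_sq : Integrable (fun ω => ‖g ω‖ ^ 2) μ)
    (hfg : Integrable (fun ω => f (x + α • g ω)) μ) :
    f x + α * ⟪v, ∫ ω, g ω ∂μ⟫ - L * α ^ 2 / 2 * ∫ ω, ‖g ω‖ ^ 2 ∂μ ≤
      ∫ ω, f (x + α • g ω) ∂μ := by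
  have h_affine : Integrable (fun ω => f x + α * ⟪v, g ω⟫) μ :=
    (integrable_const _).add ((hg.const_inner v).const_mul α)
  have h_pointwise : ∀ ω, f x + α * ⟪v, g ω⟫ - L * α ^ 2 / 2 * ‖g ω‖ ^ 2 ≤ f (x + α • g ω) := by
    intro ω
    have h := hf (x + α • g ω)
    rw [add_sub_cancel_left, real_inner_smul_right, norm_smul, Real.norm_eq_abs, mul_pow,
      sq_abs] at h
    linarith
  have h : ∫ ω, (f x + α * ⟪v, g ω⟫ - L * α ^ 2 / 2 * ‖g ω‖ ^ 2) ∂μ ≤ ∫ ω, f (x + α • g ω) ∂μ :=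
    integral_mono (h_affine.sub (hg_sq.const_mul _)) hfg h_pointwise
  rwa [integral_sub h_affine (hg_sq.const_mul _), integral_add (integrable_const _)
    ((hg.const_inner v).const_mul α), integral_const_mul, integral_const_mul, integral_inner hg,
    integral_const, probReal_univ, one_smul] at h

end Expectation

theorem stmt_2_general
    {E : Type*} [NormedAddCommGroup E] [InnerProductSpace ℝ E] [CompleteSpace E]
    (J : E → ℝ) (gradJ : E → E)
    (L : ℝ) (hL : 0 < L)
    (hsmooth : ∀ θ θ' : E,
      J θ' ≥ J θ + ⟪gradJ θ, θ' - θ⟫ - L / 2 * ‖θ' - θ‖ ^ 2)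
    (c : ℝ) (Jstar : ℝ)
    (hPL : ∀ θ : E, ‖gradJ θ‖ ^ 2 ≥ c * (Jstar - J θ))
    (α : ℝ) (hα : 0 < α) (hLα : L * α ≤ 1)
    (η : ℝ) (hη : η = α * c / 2)
    (δ ε' : ℝ)
    (hnoise : L * α ^ 2 * δ ^ 2 ≤ η * ε')
    (θ : E)
    {Ω : Type*} [MeasurableSpace Ω] (μ : Measure Ω) [IsProbabilityMeasure μ]
    (g : Ω → E) (hg_int : Integrable g μ)
    (hg_mean : ∫ ω, g ω ∂μ = gradJ θ)
    (hg_sq_int : Integrable (fun ω => ‖g ω‖ ^ 2) μ)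
    (hg_var : ∫ ω, ‖g ω - gradJ θ‖ ^ 2 ∂μ ≤ δ ^ 2)
    (hJ_int : Integrable (fun ω => J (θ + α • g ω)) μ) :
    Jstar - ∫ ω, J (θ + α • g ω) ∂μ ≤
      (1 - η) * (Jstar - J θ) + η * ε' / 2 := by
  have h_second_moment : ∫ ω, ‖g ω‖ ^ 2 ∂μ ≤ δ ^ 2 + ‖gradJ θ‖ ^ 2 := by
    have := integral_norm_sub_integral_sq hg_int hg_sq_int
    rw [hg_mean] at this
    linarith
  have h_descent := le_integral_comp_add_smul_of_forall_le (hsmooth θ) α hg_int hg_sq_int hJ_int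
  rw [hg_mean, real_inner_self_eq_norm_sq] at h_descent
  have h_progress : α / 2 * ‖gradJ θ‖ ^ 2 ≤ α * (1 - L * α / 2) * ‖gradJ θ‖ ^ 2 :=
    mul_le_mul_of_nonneg_right (by nlinarith) (sq_nonneg _)
  calc Jstar - ∫ ω, J (θ + α • g ω) ∂μ
      ≤ Jstar - J θ - α * ‖gradJ θ‖ ^ 2 + L * α ^ 2 / 2 * (δ ^ 2 + ‖gradJ θ‖ ^ 2) := by
        have := mul_le_mul_of_nonneg_left h_second_moment (by positivity : 0 ≤ L * α ^ 2 / 2)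
        linarith
    _ = Jstar - J θ - α * (1 - L * α / 2) * ‖gradJ θ‖ ^ 2 + L * α ^ 2 * δ ^ 2 / 2 := by ring
    _ ≤ Jstar - J θ - α / 2 * (c * (Jstar - J θ)) + η * ε' / 2 := by
        have := mul_le_mul_of_nonneg_left (hPL θ) (by positivity : 0 ≤ α / 2)
        linarith
    _ = (1 - η) * (Jstar - J θ) + η * ε' / 2 := by rw [hη]; ring

/-- One-step recursive inequality `E[Δ_{t+1}] ≤ (1 - η) Δ_t + η ε'/2` with
`η = αc/2`, under `Lα ≤ 1` and the noise condition `Lα²δ² ≤ η ε'`. -/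
theorem stmt_2
    {E : Type*} [NormedAddCommGroup E] [InnerProductSpace ℝ E] [CompleteSpace E]
    (J : E → ℝ) (gradJ : E → E)
    (hgrad : ∀ θ, HasGradientAt J (gradJ θ) θ)
    (L : ℝ) (hL : 0 < L)
    (hsmooth : ∀ θ θ' : E,
      J θ' ≥ J θ + ⟪gradJ θ, θ' - θ⟫ - L / 2 * ‖θ' - θ‖ ^ 2)
    (c : ℝ) (hc : 0 < c) (Jstar : ℝ)
    (hPL : ∀ θ : E, ‖gradJ θ‖ ^ 2 ≥ c * (Jstar - J θ))
    (α : ℝ) (hα : 0 < α) (hLα : L * α ≤ 1)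
    (η : ℝ) (hη : η = α * c / 2) (hη1 : η ≤ 1)
    (δ ε' : ℝ) (hδ : 0 ≤ δ) (hε' : 0 < ε')
    (hnoise : L * α ^ 2 * δ ^ 2 ≤ η * ε')
    (θ : E) (hgap : Jstar - J θ ≥ 0)
    {Ω : Type*} [MeasurableSpace Ω] (μ : Measure Ω) [IsProbabilityMeasure μ]
    (g : Ω → E) (hg_int : Integrable g μ)
    (hg_mean : ∫ ω, g ω ∂μ = gradJ θ)
    (hg_sq_int : Integrable (fun ω => ‖g ω‖ ^ 2) μ)
    (hg_var : ∫ ω, ‖g ω - gradJ θ‖ ^ 2 ∂μ ≤ δ ^ 2)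
    (hJ_int : Integrable (fun ω => J (θ + α • g ω)) μ) :
    Jstar - ∫ ω, J (θ + α • g ω) ∂μ ≤
      (1 - η) * (Jstar - J θ) + η * ε' / 2 :=
  stmt_2_general J gradJ L hL hsmooth c Jstar hPL α hα hLα η hη δ ε' hnoise θ μ g hg_int hg_mean
    hg_sq_int hg_var hJ_int
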